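/- arXiv:1801.00465 — 5 statements merged into one kernel-verified Lean document; each statement's English description precedes it below -/
import Mathlib

section
/- Let a₀, a₁, a₂, a₃ ∈ (0, π), set k_j = exp(i a_j) and u_j = t_j(conj k_j − k_j) + k_j for real t_j. If a₀ + a₁ + a₂ + a₃ ≤ π or 3π ≤ a₀ + a₁ + a₂ + a₃, then there is no solution of the equation 1 + 2 Re(conj(k₀) u₁ u₂ u₃) = |u₁|² + |u₂|² + |u₃|² with t₁, t₂ ≥ 1 and t₃ = 1. -/
/-!
With `t₃ = 1` we have `u₃ = conj k₃`, and the equation says exactly that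
`‖conj k₀ conj k₃ u₁ - conj u₂‖² = 0`, so `arg u₁ + arg u₂ ≡ a₀ + a₃ (mod 2π)`.
For `t > 1/2` the number `u = t (conj k - k) + k` lies in the lower half plane while `k u` lies in
the right half plane, so `φ = arg u` satisfies `-π < φ < 0` and `|a + φ| < π/2`.  Hence
`arg u₁ + arg u₂` lies strictly between `a₀ + a₃ - 2π` and `a₀ + a₃` when `∑ aⱼ ≤ π`, and strictly
between `a₀ + a₃ - 4π` and `a₀ + a₃ - 2π` when `∑ aⱼ ≥ 3π`; neither is compatible with the
congruence.
-/

open Complex Real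
open scoped ComplexConjugate

lemma Real.Angle.coe_ne_coe_of_lt_of_lt_add_two_pi {x y : ℝ} (hxy : x < y)
    (hyx : y < x + 2 * π) : (x : Real.Angle) ≠ y := by
  rw [Ne, Real.Angle.angle_eq_iff_two_pi_dvd_sub]
  rintro ⟨n, hn⟩
  have hneg : (n : ℝ) < 0 := by nlinarith [pi_pos]
  have hgt : (-1 : ℝ) < n := by nlinarith [pi_pos]
  norm_cast at hneg hgt
  omega

lemma Real.Angle.coe_add_ne_coe_add_of_sum_le_pi_or_three_pi_le {a0 a1 a2 a3 φ1 φ2 : ℝ}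
    (h0 : a0 ∈ Set.Ioo 0 π) (h3 : a3 ∈ Set.Ioo 0 π) (hφ1 : φ1 ∈ Set.Ioo (-π) 0)
    (hφ2 : φ2 ∈ Set.Ioo (-π) 0) (h1 : |a1 + φ1| < π / 2) (h2 : |a2 + φ2| < π / 2)
    (hsum : a0 + a1 + a2 + a3 ≤ π ∨ 3 * π ≤ a0 + a1 + a2 + a3) :
    ((φ1 + φ2 : ℝ) : Real.Angle) ≠ (a0 + a3 : ℝ) := by
  obtain ⟨hl1, hr1⟩ := abs_lt.mp h1
  obtain ⟨hl2, hr2⟩ := abs_lt.mp h2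
  rcases hsum with hsum | hsum
  · exact coe_ne_coe_of_lt_of_lt_add_two_pi (by linarith [hφ1.2, hφ2.2, h0.1, h3.1])
      (by linarith)
  · rw [← add_zero ((φ1 + φ2 : ℝ) : Real.Angle), ← coe_two_pi, ← coe_add]
    exact coe_ne_coe_of_lt_of_lt_add_two_pi (by linarith)
      (by linarith [hφ1.1, hφ2.1, h0.2, h3.2])

namespace Complex

lemma arg_exp_ofReal_mul_I {a : ℝ} (ha : a ∈ Set.Ioc (-π) π) : arg (exp (a * I)) = a := by
  rw [arg_exp_mul_I, toIocMod_eq_self]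
  simpa [show -π + 2 * π = π by ring] using ha

lemma im_exp_ofReal_mul_I_pos {a : ℝ} (ha : a ∈ Set.Ioo 0 π) : 0 < (exp (a * I)).im := by
  rw [exp_ofReal_mul_I_im]
  exact sin_pos_of_pos_of_lt_pi ha.1 ha.2

lemma mul_eq_conj_of_two_re_mul_mul_eq {c x y : ℂ} (hc : ‖c‖ = 1)
    (h : 2 * (c * x * y).re = ‖x‖ ^ 2 + ‖y‖ ^ 2) : c * x = conj y := by
  rw [← sub_eq_zero, ← normSq_eq_zero, normSq_sub, normSq_mul, normSq_conj, normSq_eq_norm_sq,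
    normSq_eq_norm_sq, normSq_eq_norm_sq, hc, conj_conj]
  linear_combination (-1 : ℝ) * h

lemma arg_add_arg_add_arg_eq_zero_of_mul_eq_conj {c x y : ℂ} (hc : c ≠ 0) (hx : x ≠ 0)
    (h : c * x = conj y) : (arg c : Real.Angle) + arg x + arg y = 0 := by
  rw [← arg_mul_coe_angle hc hx, h, arg_conj_coe_angle, neg_add_cancel]

section

variable {k : ℂ} {t : ℝ}

lemma im_ofReal_mul_conj_sub_add_neg (hk : 0 < k.im) (ht : 1 / 2 < t) :
    ((t : ℂ) * (conj k - k) + k).im < 0 := by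
  simp only [add_im, mul_im, ofReal_re, ofReal_im, sub_im, conj_im, zero_mul, add_zero]
  nlinarith

lemma re_mul_ofReal_mul_conj_sub_add_pos (hk : ‖k‖ = 1) (ht : 1 / 2 < t) :
    0 < (k * ((t : ℂ) * (conj k - k) + k)).re := by
  have hre : (k * ((t : ℂ) * (conj k - k) + k)).re = t + (1 - t) * (k ^ 2).re := by
    have hkk : k * conj k = 1 := by
      rw [mul_conj, normSq_eq_norm_sq, hk]
      norm_num
    rw [show k * ((t : ℂ) * (conj k - k) + k) = t * (k * conj k) + (1 - t) * k ^ 2 by ring, hkk]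
    simp
  have hsq : |(k ^ 2).re| ≤ 1 := (abs_re_le_norm _).trans (by rw [norm_pow, hk, one_pow])
  rw [hre]
  rcases le_total t 1 with h | h <;> nlinarith [abs_le.mp hsq]

lemma arg_ofReal_mul_conj_sub_add_bounds (hk1 : ‖k‖ = 1) (hk : 0 < k.im) (ht : 1 / 2 < t) :
    arg ((t : ℂ) * (conj k - k) + k) < 0 ∧
      |arg k + arg ((t : ℂ) * (conj k - k) + k)| < π / 2 := by
  set u := (t : ℂ) * (conj k - k) + k
  have hu : arg u < 0 := arg_neg_iff.mpr (im_ofReal_mul_conj_sub_add_neg hk ht)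
  have hk0 : k ≠ 0 := fun h => by simp [h] at hk
  have hu0 : u ≠ 0 := ne_of_apply_ne arg (by rw [arg_zero]; exact hu.ne)
  refine ⟨hu, ?_⟩
  rw [← arg_mul hk0 hu0]
  · exact abs_arg_lt_pi_div_two_iff.mpr (Or.inl (re_mul_ofReal_mul_conj_sub_add_pos hk1 ht))
  · constructor
    · linarith [neg_pi_lt_arg u, arg_nonneg_iff.mpr hk.le]
    · linarith [arg_le_pi k]

end

end Complex

theorem stmt2 (a0 a1 a2 a3 : ℝ)
    (h0 : a0 ∈ Set.Ioo 0 π) (h1 : a1 ∈ Set.Ioo 0 π)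
    (h2 : a2 ∈ Set.Ioo 0 π) (h3 : a3 ∈ Set.Ioo 0 π)
    (hsum : a0 + a1 + a2 + a3 ≤ π ∨ 3 * π ≤ a0 + a1 + a2 + a3) :
    ¬ ∃ t1 t2 t3 : ℝ, 1 ≤ t1 ∧ 1 ≤ t2 ∧ t3 = 1 ∧
      (let k0 : ℂ := Complex.exp (a0 * Complex.I)
       let k1 : ℂ := Complex.exp (a1 * Complex.I)
       let k2 : ℂ := Complex.exp (a2 * Complex.I)
       let k3 : ℂ := Complex.exp (a3 * Complex.I)
       let u1 : ℂ := (t1 : ℂ) * ((starRingEnd ℂ) k1 - k1) + k1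
       let u2 : ℂ := (t2 : ℂ) * ((starRingEnd ℂ) k2 - k2) + k2
       let u3 : ℂ := (t3 : ℂ) * ((starRingEnd ℂ) k3 - k3) + k3
       1 + 2 * ((starRingEnd ℂ) k0 * u1 * u2 * u3).re
         = ‖u1‖ ^ 2 + ‖u2‖ ^ 2 + ‖u3‖ ^ 2) := by
  rintro ⟨t1, t2, t3, ht1, ht2, rfl, heq⟩
  dsimp only at heq
  have harg : ∀ {a : ℝ}, a ∈ Set.Ioo 0 π → arg (exp (a * I)) = a :=
    fun ha => arg_exp_ofReal_mul_I ⟨by linarith [ha.1, pi_pos], ha.2.le⟩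
  obtain ⟨hu1, hφ1⟩ := arg_ofReal_mul_conj_sub_add_bounds (norm_exp_ofReal_mul_I a1)
    (im_exp_ofReal_mul_I_pos h1) (t := t1) (by linarith)
  obtain ⟨hu2, hφ2⟩ := arg_ofReal_mul_conj_sub_add_bounds (norm_exp_ofReal_mul_I a2)
    (im_exp_ofReal_mul_I_pos h2) (t := t2) (by linarith)
  rw [harg h1] at hφ1
  rw [harg h2] at hφ2
  set k0 := exp (a0 * I)
  set k3 := exp (a3 * I)
  set u1 := (t1 : ℂ) * (conj (exp (a1 * I)) - exp (a1 * I)) + exp (a1 * I)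
  set u2 := (t2 : ℂ) * (conj (exp (a2 * I)) - exp (a2 * I)) + exp (a2 * I)
  have hk0n : ‖k0‖ = 1 := norm_exp_ofReal_mul_I a0
  have hk3n : ‖k3‖ = 1 := norm_exp_ofReal_mul_I a3
  have hu3 : ((1 : ℝ) : ℂ) * (conj k3 - k3) + k3 = conj k3 := by push_cast; ring
  rw [hu3, norm_conj, hk3n] at heq
  have hc : ‖conj k0 * conj k3‖ = 1 := by
    rw [norm_mul, norm_conj, norm_conj, hk0n, hk3n, one_mul]
  have hconj : conj k0 * conj k3 * u1 = conj u2 := mul_eq_conj_of_two_re_mul_mul_eq hc (by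
    rw [show conj k0 * conj k3 * u1 * u2 = conj k0 * u1 * u2 * conj k3 by ring]
    linear_combination heq)
  have hk0 : conj k0 ≠ 0 := (map_ne_zero _).mpr (exp_ne_zero _)
  have hk3 : conj k3 ≠ 0 := (map_ne_zero _).mpr (exp_ne_zero _)
  have hangle := arg_add_arg_add_arg_eq_zero_of_mul_eq_conj (mul_ne_zero hk0 hk3)
    (ne_of_apply_ne arg (by rw [arg_zero]; exact hu1.ne)) hconj
  rw [arg_mul_coe_angle hk0 hk3, arg_conj_coe_angle, arg_conj_coe_angle, harg h0, harg h3]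
    at hangle
  have hcongr : ((arg u1 + arg u2 : ℝ) : Real.Angle) = (a0 + a3 : ℝ) := by
    rw [← sub_eq_zero, ← hangle, Real.Angle.coe_add, Real.Angle.coe_add]
    abel
  exact Real.Angle.coe_add_ne_coe_add_of_sum_le_pi_or_three_pi_le h0 h3
    ⟨neg_pi_lt_arg u1, hu1⟩ ⟨neg_pi_lt_arg u2, hu2⟩ hφ1 hφ2 hsum hcongr
end

section
/- Let a₀, a₁, a₂, a₃ ∈ (0, π), set k_j = exp(i a_j) and u_j = t_j(conj k_j − k_j) + k_j. Then the set of solutions (t₁, t₂, t₃) ∈ [1, ∞)³ of the equation 1 − 2 Re(conj(k₀) u₁ u₂ u₃) = |u₁|² + |u₂|² + |u₃|² is compact. -/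
/-!
With `k = exp (a i)` one has `t (conj k - k) + k = cos a - b i`, where `b = sin a (2t - 1) ≥ sin a > 0`
for `t ≥ 1`. Expanding the equation in these coordinates and bounding every cosine by `1` in absolute
value leaves the cubic inequality
`2 s b₁ b₂ b₃ + b₁² + b₂² + b₃² - 2 (b₁ b₂ + b₁ b₃ + b₂ b₃) - 2 s (b₁ + b₂ + b₃) ≤ 3`, `s = sin a₀ > 0`.
If the largest `bᵢ` is large, the cubic term forces the product of the other two to be at most `7`,
so they are bounded (each is at least `min sin aⱼ`), and then the square `(b₁ - b₂ - b₃)²` bounds the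
largest one. Hence the solution set is a closed subset of a box.
-/

open Complex Real

open ComplexConjugate

lemma conj_exp_ofReal_mul_I (a : ℝ) :
    conj (exp (a * I)) = (Real.cos a : ℂ) - (Real.sin a : ℂ) * I := by
  rw [exp_mul_I, map_add, map_mul, conj_I, ← ofReal_cos, ← ofReal_sin, conj_ofReal, conj_ofReal]
  ring

lemma ofReal_mul_conj_sub_add_eq (a t : ℝ) :
    (t : ℂ) * (conj (exp (a * I)) - exp (a * I)) + exp (a * I) =
      (Real.cos a : ℂ) - ((Real.sin a * (2 * t - 1) : ℝ) : ℂ) * I := by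
  rw [exp_mul_I, map_add, map_mul, conj_I, ← ofReal_cos, ← ofReal_sin, conj_ofReal, conj_ofReal]
  push_cast
  ring

lemma re_prod_sub_mul_I (c₀ c₁ c₂ c₃ x₀ x₁ x₂ x₃ : ℝ) :
    ((c₀ - x₀ * I) * (c₁ - x₁ * I) * (c₂ - x₂ * I) * (c₃ - x₃ * I) : ℂ).re =
      c₀ * c₁ * c₂ * c₃ - (c₀ * c₁ * x₂ * x₃ + c₀ * c₂ * x₁ * x₃ + c₀ * c₃ * x₁ * x₂
        + c₁ * c₂ * x₀ * x₃ + c₁ * c₃ * x₀ * x₂ + c₂ * c₃ * x₀ * x₁) + x₀ * x₁ * x₂ * x₃ := by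
  simp only [mul_re, mul_im, sub_re, sub_im, ofReal_re, ofReal_im, I_re, I_im]
  ring

lemma norm_sub_mul_I_sq (c x : ℝ) : ‖(c - x * I : ℂ)‖ ^ 2 = c ^ 2 + x ^ 2 := by
  rw [Complex.sq_norm, normSq_apply]
  simp only [sub_re, sub_im, mul_re, mul_im, ofReal_re, ofReal_im, I_re, I_im]
  ring

lemma cubic_le_three_of_eq {c₀ c₁ c₂ c₃ x₀ x₁ x₂ x₃ : ℝ}
    (hc₀ : |c₀| ≤ 1) (hc₁ : |c₁| ≤ 1) (hc₂ : |c₂| ≤ 1) (hc₃ : |c₃| ≤ 1)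
    (hx₀ : 0 ≤ x₀) (hx₁ : 0 ≤ x₁) (hx₂ : 0 ≤ x₂) (hx₃ : 0 ≤ x₃)
    (h : 1 - 2 * ((c₀ - x₀ * I) * (c₁ - x₁ * I) * (c₂ - x₂ * I) * (c₃ - x₃ * I) : ℂ).re =
      ‖(c₁ - x₁ * I : ℂ)‖ ^ 2 + ‖(c₂ - x₂ * I : ℂ)‖ ^ 2 + ‖(c₃ - x₃ * I : ℂ)‖ ^ 2) :
    2 * x₀ * x₁ * x₂ * x₃ + x₁ ^ 2 + x₂ ^ 2 + x₃ ^ 2 - 2 * (x₁ * x₂ + x₁ * x₃ + x₂ * x₃)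
      - 2 * x₀ * (x₁ + x₂ + x₃) ≤ 3 := by
  rw [re_prod_sub_mul_I, norm_sub_mul_I_sq, norm_sub_mul_I_sq, norm_sub_mul_I_sq] at h
  have hc : ∀ {c d : ℝ}, |c| ≤ 1 → |d| ≤ 1 → |c * d| ≤ 1 := fun hc hd => by
    rw [abs_mul]; exact mul_le_one₀ hc (abs_nonneg _) hd
  have h01 := abs_le.1 (hc hc₀ hc₁)
  have h02 := abs_le.1 (hc hc₀ hc₂)
  have h03 := abs_le.1 (hc hc₀ hc₃)
  have h12 := abs_le.1 (hc hc₁ hc₂)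
  have h13 := abs_le.1 (hc hc₁ hc₃)
  have h23 := abs_le.1 (hc hc₂ hc₃)
  have h0123 : -1 ≤ c₀ * c₁ * (c₂ * c₃) := by nlinarith
  nlinarith [mul_nonneg hx₂ hx₃, mul_nonneg hx₁ hx₃, mul_nonneg hx₁ hx₂, mul_nonneg hx₀ hx₁,
    mul_nonneg hx₀ hx₂, mul_nonneg hx₀ hx₃, sq_nonneg c₁, sq_nonneg c₂, sq_nonneg c₃]

lemma le_of_cubic_le_three_of_max {s m x y z : ℝ} (hs : 0 < s) (hs1 : s ≤ 1) (hm : 0 < m)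
    (hmy : m ≤ y) (hmz : m ≤ z) (hyx : y ≤ x) (hzx : z ≤ x)
    (h : 2 * s * x * y * z + x ^ 2 + y ^ 2 + z ^ 2 - 2 * (x * y + x * z + y * z)
      - 2 * s * (x + y + z) ≤ 3) :
    x ≤ 4 / s + 98 / m + 7 := by
  have hy : 0 < y := hm.trans_le hmy
  have hz : 0 < z := hm.trans_le hmz
  -- `x² + y² + z² - 2 (xy + xz + yz) = (x - y - z)² - 4yz`, and `x + y + z ≤ 3x`
  have hsplit : (x - y - z) ^ 2 + 2 * y * z * (s * x - 2) ≤ 3 + 6 * s * x := by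
    nlinarith [mul_le_mul_of_nonneg_left (add_le_add hyx hzx) hs.le]
  rcases le_or_gt (s * x) 4 with hsx | hsx
  · have : x ≤ 4 / s := (le_div_iff₀' hs).2 hsx
    have : 0 ≤ 98 / m := by positivity
    linarith
  have hyz : y * z ≤ 7 := by
    by_contra! hyz
    nlinarith [mul_lt_mul_of_pos_right hyz (by linarith : 0 < s * x)]
  have hK : y + z ≤ 14 / m := by
    have : y ≤ 7 / m := (le_div_iff₀' hm).2 (by nlinarith)
    have : z ≤ 7 / m := (le_div_iff₀' hm).2 (by nlinarith)
    linarith [show 14 / m = 7 / m + 7 / m by ring]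
  have hsq : (x - y - z) ^ 2 ≤ 3 + 6 * x := by
    nlinarith [mul_nonneg (mul_nonneg hy.le hz.le) (by linarith : 0 ≤ s * x - 2)]
  have : 0 ≤ 4 / s := by positivity
  by_contra! hx
  have hw : 6 * (14 / m) + 7 < x - y - z := by linarith [show 98 / m = 7 * (14 / m) by ring]
  nlinarith [mul_lt_mul_of_pos_left hw (by linarith : (0 : ℝ) < x - y - z)]

lemma le_of_cubic_le_three {s m x y z : ℝ} (hs : 0 < s) (hs1 : s ≤ 1) (hm : 0 < m)
    (hmx : m ≤ x) (hmy : m ≤ y) (hmz : m ≤ z)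
    (h : 2 * s * x * y * z + x ^ 2 + y ^ 2 + z ^ 2 - 2 * (x * y + x * z + y * z)
      - 2 * s * (x + y + z) ≤ 3) :
    x ≤ 4 / s + 98 / m + 7 ∧ y ≤ 4 / s + 98 / m + 7 ∧ z ≤ 4 / s + 98 / m + 7 := by
  rcases le_total y x with hyx | hxy
  · rcases le_total z x with hzx | hxz
    · have := le_of_cubic_le_three_of_max hs hs1 hm hmy hmz hyx hzx h
      exact ⟨this, by linarith, by linarith⟩
    · have := le_of_cubic_le_three_of_max hs hs1 hm hmx hmy hxz (hyx.trans hxz) (by linarith)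
      exact ⟨by linarith, by linarith, this⟩
  · rcases le_total z y with hzy | hyz
    · have := le_of_cubic_le_three_of_max hs hs1 hm hmx hmz hxy hzy (by linarith)
      exact ⟨by linarith, this, by linarith⟩
    · have := le_of_cubic_le_three_of_max hs hs1 hm hmx hmy (hxy.trans hyz) hyz (by linarith)
      exact ⟨by linarith, by linarith, this⟩

lemma le_of_mul_two_mul_sub_one_le {s t C : ℝ} (hs : 0 < s) (h : s * (2 * t - 1) ≤ C) :
    t ≤ (C / s + 1) / 2 := by
  have := (le_div_iff₀' hs).2 h
  linarith

theorem stmt3 (a0 a1 a2 a3 : ℝ)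
    (h0 : a0 ∈ Set.Ioo 0 π) (h1 : a1 ∈ Set.Ioo 0 π)
    (h2 : a2 ∈ Set.Ioo 0 π) (h3 : a3 ∈ Set.Ioo 0 π) :
    IsCompact {p : ℝ × ℝ × ℝ |
      1 ≤ p.1 ∧ 1 ≤ p.2.1 ∧ 1 ≤ p.2.2 ∧
      (let k0 : ℂ := Complex.exp (a0 * Complex.I)
       let k1 : ℂ := Complex.exp (a1 * Complex.I)
       let k2 : ℂ := Complex.exp (a2 * Complex.I)
       let k3 : ℂ := Complex.exp (a3 * Complex.I)
       let u1 : ℂ := (p.1 : ℂ) * ((starRingEnd ℂ) k1 - k1) + k1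
       let u2 : ℂ := (p.2.1 : ℂ) * ((starRingEnd ℂ) k2 - k2) + k2
       let u3 : ℂ := (p.2.2 : ℂ) * ((starRingEnd ℂ) k3 - k3) + k3
       1 - 2 * ((starRingEnd ℂ) k0 * u1 * u2 * u3).re
         = ‖u1‖ ^ 2 + ‖u2‖ ^ 2 + ‖u3‖ ^ 2)} := by
  have hsin : ∀ a ∈ Set.Ioo 0 π, 0 < Real.sin a := fun a ha => sin_pos_of_pos_of_lt_pi ha.1 ha.2
  set m := min (Real.sin a1) (min (Real.sin a2) (Real.sin a3))
  have hm : 0 < m := lt_min (hsin a1 h1) (lt_min (hsin a2 h2) (hsin a3 h3))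
  set C := 4 / Real.sin a0 + 98 / m + 7
  refine IsCompact.of_isClosed_subset (isCompact_Icc (a := ((1 : ℝ), (1 : ℝ), (1 : ℝ)))
    (b := ((C / Real.sin a1 + 1) / 2, (C / Real.sin a2 + 1) / 2, (C / Real.sin a3 + 1) / 2))) ?_ ?_
  · simp only [Set.ofPred_and]
    exact (isClosed_le continuous_const (by fun_prop)).inter
      ((isClosed_le continuous_const (by fun_prop)).inter
      ((isClosed_le continuous_const (by fun_prop)).inter (isClosed_eq (by fun_prop) (by fun_prop))))
  rintro ⟨t1, t2, t3⟩ ⟨ht1, ht2, ht3, heq⟩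
  dsimp only at ht1 ht2 ht3 heq
  rw [ofReal_mul_conj_sub_add_eq, ofReal_mul_conj_sub_add_eq, ofReal_mul_conj_sub_add_eq,
    conj_exp_ofReal_mul_I] at heq
  have hb : ∀ {a t : ℝ}, m ≤ Real.sin a → 1 ≤ t → m ≤ Real.sin a * (2 * t - 1) := fun ha ht =>
    ha.trans (le_mul_of_one_le_right (hm.le.trans ha) (by linarith))
  have hm1 : m ≤ Real.sin a1 := min_le_left _ _
  have hm2 : m ≤ Real.sin a2 := (min_le_right _ _).trans (min_le_left _ _)
  have hm3 : m ≤ Real.sin a3 := (min_le_right _ _).trans (min_le_right _ _)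
  have hQ := cubic_le_three_of_eq (abs_cos_le_one a0) (abs_cos_le_one a1) (abs_cos_le_one a2)
    (abs_cos_le_one a3) (hsin a0 h0).le (hm.le.trans (hb hm1 ht1)) (hm.le.trans (hb hm2 ht2))
    (hm.le.trans (hb hm3 ht3)) heq
  obtain ⟨hC1, hC2, hC3⟩ := le_of_cubic_le_three (hsin a0 h0) (sin_le_one a0) hm
    (hb hm1 ht1) (hb hm2 ht2) (hb hm3 ht3) hQ
  exact ⟨⟨ht1, ht2, ht3⟩, le_of_mul_two_mul_sub_one_le (hsin a1 h1) hC1,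
    le_of_mul_two_mul_sub_one_le (hsin a2 h2) hC2, le_of_mul_two_mul_sub_one_le (hsin a3 h3) hC3⟩
end

section
/- Let a₀, a₁, a₂, a₃ ∈ (0, π) with a₀ + a₁ + a₂ + a₃ ≤ π, and set k_j = exp(i a_j), s = sin(a₀+a₃), b = cos(a₀+a₃), s_j = sin a_j, b_j = cos a_j for j = 1, 2. Suppose t₁, t₂ are real numbers such that u₂ = conj(u₁) k₀ k₃, where u_j = t_j(conj k_j − k_j) + k_j. Then 2t₁ − 1 = (b₁b − b₂)/(s₁ s) and 2t₂ − 1 = (b₂b − b₁)/(s₂ s), and it cannot happen that both t₁ ≥ 1 and t₂ ≥ 1. -/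
/-!
With `c = 2 t - 1` one has `t (conj k - k) + k = cos a - i c sin a` for `k = exp (i a)`, and since
`|exp (i σ)| = 1` the relation `u₂ = conj u₁ · exp (i σ)`, `σ = a₀ + a₃`, is symmetric in the indices
1 and 2. Its real part `cos a₂ = cos a₁ cos σ - c₁ sin a₁ sin σ` determines `c₁`, and turns `c₁ ≥ 1`
into `cos a₂ ≤ cos (a₁ + σ)`, i.e. `a₁ + σ ≤ a₂` because cosine decreases on `[0, π]`. Together with
the symmetric `a₂ + σ ≤ a₁` this contradicts `σ > 0`.
-/

open Complex Real

theorem mul_conj_exp_sub_exp_add_exp (t x : ℝ) :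
    (t : ℂ) * (starRingEnd ℂ (exp (x * I)) - exp (x * I)) + exp (x * I)
      = (Real.cos x : ℂ) - ((2 * t - 1) * Real.sin x : ℝ) * I := by
  apply Complex.ext
  · simp [exp_ofReal_mul_I_re, cos_ofReal_re]
  · simp [exp_ofReal_mul_I_im, sin_ofReal_re]
    ring

theorem eq_conj_mul_exp_symm {w₁ w₂ : ℂ} {σ : ℝ} (h : w₂ = starRingEnd ℂ w₁ * exp (σ * I)) :
    w₁ = starRingEnd ℂ w₂ * exp (σ * I) := by
  rw [h, map_mul, Complex.conj_conj, ← exp_conj, mul_assoc, ← Complex.exp_add]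
  simp [conj_ofReal]

theorem re_eq_of_eq_conj_mul_exp {p q x y σ : ℝ}
    (h : (p : ℂ) - q * I = starRingEnd ℂ ((x : ℂ) - y * I) * exp (σ * I)) :
    p = x * Real.cos σ - y * Real.sin σ := by
  simpa [exp_ofReal_mul_I_re, exp_ofReal_mul_I_im] using congrArg re h

theorem eq_div_of_cos_eq {a₁ a₂ σ c : ℝ}
    (h : Real.cos a₂ = Real.cos a₁ * Real.cos σ - c * Real.sin a₁ * Real.sin σ)
    (hs₁ : Real.sin a₁ ≠ 0) (hs : Real.sin σ ≠ 0) :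
    c = (Real.cos a₁ * Real.cos σ - Real.cos a₂) / (Real.sin a₁ * Real.sin σ) := by
  rw [eq_div_iff (mul_ne_zero hs₁ hs)]
  linarith

theorem add_le_of_cos_eq_of_one_le {a₁ a₂ σ c : ℝ}
    (h : Real.cos a₂ = Real.cos a₁ * Real.cos σ - c * Real.sin a₁ * Real.sin σ)
    (ha₁ : 0 < a₁) (hσ : 0 < σ) (hπ : a₁ + σ ≤ π) (ha₂ : a₂ ∈ Set.Icc 0 π)
    (hc : 1 ≤ c) : a₁ + σ ≤ a₂ := by
  have hs₁ : 0 < Real.sin a₁ := Real.sin_pos_of_pos_of_lt_pi ha₁ (by linarith)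
  have hs : 0 < Real.sin σ := Real.sin_pos_of_pos_of_lt_pi hσ (by linarith)
  have hcos : Real.cos a₂ ≤ Real.cos (a₁ + σ) := by
    rw [h, Real.cos_add]
    nlinarith [mul_pos hs₁ hs]
  exact (Real.strictAntiOn_cos.le_iff_ge ha₂ ⟨by linarith, hπ⟩).mp hcos

theorem stmt8 (a0 a1 a2 a3 : ℝ)
    (h0 : a0 ∈ Set.Ioo 0 π) (h1 : a1 ∈ Set.Ioo 0 π)
    (h2 : a2 ∈ Set.Ioo 0 π) (h3 : a3 ∈ Set.Ioo 0 π)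
    (hsum : a0 + a1 + a2 + a3 ≤ π)
    (t1 t2 : ℝ)
    (hu : (t2 : ℂ) * ((starRingEnd ℂ) (Complex.exp (a2 * Complex.I)) - Complex.exp (a2 * Complex.I))
            + Complex.exp (a2 * Complex.I)
          = (starRingEnd ℂ) ((t1 : ℂ) * ((starRingEnd ℂ) (Complex.exp (a1 * Complex.I))
                - Complex.exp (a1 * Complex.I)) + Complex.exp (a1 * Complex.I))
            * Complex.exp (a0 * Complex.I) * Complex.exp (a3 * Complex.I)) :
    2 * t1 - 1 = (Real.cos a1 * Real.cos (a0 + a3) - Real.cos a2) / (Real.sin a1 * Real.sin (a0 + a3)) ∧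
    2 * t2 - 1 = (Real.cos a2 * Real.cos (a0 + a3) - Real.cos a1) / (Real.sin a2 * Real.sin (a0 + a3)) ∧
    ¬ (1 ≤ t1 ∧ 1 ≤ t2) := by
  obtain ⟨h0, -⟩ := h0
  obtain ⟨h1, -⟩ := h1
  obtain ⟨h2, -⟩ := h2
  obtain ⟨h3, -⟩ := h3
  have hk : exp (a0 * I) * exp (a3 * I) = exp ((a0 + a3 : ℝ) * I) := by
    rw [← Complex.exp_add]
    push_cast
    ring_nf
  rw [mul_assoc, hk, mul_conj_exp_sub_exp_add_exp, mul_conj_exp_sub_exp_add_exp] at hu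
  have e₁ := re_eq_of_eq_conj_mul_exp hu
  have e₂ := re_eq_of_eq_conj_mul_exp (eq_conj_mul_exp_symm hu)
  have hσ : 0 < a0 + a3 := by linarith
  have hs : Real.sin (a0 + a3) ≠ 0 := (Real.sin_pos_of_pos_of_lt_pi hσ (by linarith)).ne'
  have hs₁ : Real.sin a1 ≠ 0 := (Real.sin_pos_of_pos_of_lt_pi h1 (by linarith)).ne'
  have hs₂ : Real.sin a2 ≠ 0 := (Real.sin_pos_of_pos_of_lt_pi h2 (by linarith)).ne'
  refine ⟨eq_div_of_cos_eq e₁ hs₁ hs, eq_div_of_cos_eq e₂ hs₂ hs, ?_⟩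
  rintro ⟨ht₁, ht₂⟩
  have le₁ := add_le_of_cos_eq_of_one_le e₁ h1 hσ (by linarith) ⟨h2.le, by linarith⟩ (by linarith)
  have le₂ := add_le_of_cos_eq_of_one_le e₂ h2 hσ (by linarith) ⟨h1.le, by linarith⟩ (by linarith)
  linarith
end

section
/- Let k₀,k₁,k₂,k₃ ∈ ℂ with |k_j| = 1, let V be a 2-dimensional hermitian space, and let c₀,c₁,c₂,c₃ ∈ V with ⟨c_j,c_j⟩ = 1. Set t₁ = ta(c₀,c₁), t₂ = ta(R_{c₁,k₁}c₀, c₂), t₃ = ta(c₀,c₃). If R_{c₃,k₃}R_{c₂,k₂}R_{c₁,k₁}R_{c₀,k₀} = 1 in SU(V), then the determinant of the 3×3 matrix M with rows [1, t₃(k₃ − conj k₃) + conj k₃, (t₂(conj k₂ − k₂) + k₂) conj k₀], [t₃(conj k₃ − k₃) + k₃, 1, t₁(k₁ − conj k₁) + conj k₁], [(t₂(k₂ − conj k₂) + conj k₂) k₀, t₁(conj k₁ − k₁) + k₁, 1] vanishes. -/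
open Complex Matrix

variable {V : Type*} [AddCommGroup V] [Module ℂ V]

/-- The rotation `R_{c,k} : p ↦ (conj k − k)(⟨p,c⟩/⟨c,c⟩)c + k p`, where the hermitian
form `B` is linear in its first and conjugate-linear in its second argument. -/
noncomputable def rot (B : V →ₗ[ℂ] V →ₗ⋆[ℂ] ℂ) (c : V) (k : ℂ) : V →ₗ[ℂ] V where
  toFun p := (((starRingEnd ℂ) k - k) * (B p c / B c c)) • c + k • p
  map_add' p q := by
    simp only [map_add, LinearMap.add_apply, add_div, mul_add, add_smul, smul_add]
    module
  map_smul' a p := by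
    simp only [_root_.map_smul, LinearMap.smul_apply, smul_eq_mul, RingHom.id_apply,
      mul_div_assoc]
    match_scalars <;> ring

/-- The tance `ta(p,q) = ⟨p,q⟩⟨q,p⟩/(⟨p,p⟩⟨q,q⟩)`. -/
noncomputable def tance (B : V →ₗ[ℂ] V →ₗ⋆[ℂ] ℂ) (p q : V) : ℂ :=
  (B p q * B q p) / (B p p * B q q)

/-!
The relation `R₃R₂R₁R₀ = 1` and `R_{c₀,k₀} c₀ = conj k₀ • c₀` give
`R_{c₃,k₃}⁻¹ c₀ = conj k₀ • R_{c₂,k₂} R_{c₁,k₁} c₀`. Expanding the rotations, the entries of `M`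
are then exactly the hermitian products of the three vectors `R_{c₃,k₃}⁻¹ c₀`, `c₀`,
`R_{c₁,k₁} c₀`, so `M` is their Gram matrix; three vectors of a plane are linearly dependent,
hence `det M = 0`.
-/

open ComplexConjugate

theorem det_of_sesq_eq_zero_of_finrank_lt {K E F ι : Type*} [Field K] [AddCommGroup E]
    [Module K E] [FiniteDimensional K E] [AddCommGroup F] [Module K F] [Fintype ι] [DecidableEq ι]
    {σ : K →+* K} (B : E →ₗ[K] F →ₛₗ[σ] K) (p : ι → E) (q : ι → F)
    (h : Module.finrank K E < Fintype.card ι) :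
    (Matrix.of fun i j => B (p i) (q j)).det = 0 := by
  obtain ⟨g, hg, i, hgi⟩ := Fintype.not_linearIndependent_iff.mp
    fun hp => h.not_ge hp.fintype_card_le_finrank
  refine Matrix.exists_vecMul_eq_zero_iff.mp ⟨g, fun h => hgi (congrFun h i), funext fun j => ?_⟩
  simpa [Matrix.vecMul, dotProduct, map_sum] using congrArg (B · (q j)) hg

section

variable (B : V →ₗ[ℂ] V →ₗ⋆[ℂ] ℂ)

theorem rot_apply (c : V) (k : ℂ) (p : V) :
    rot B c k p = ((conj k - k) * (B p c / B c c)) • c + k • p := rfl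

theorem rot_self {c : V} (hc : B c c ≠ 0) (k : ℂ) : rot B c k c = conj k • c := by
  rw [rot_apply, div_self hc]
  module

theorem apply_rot_left (c : V) (k : ℂ) (x y : V) :
    B (rot B c k x) y = (conj k - k) * (B x c / B c c) * B c y + k * B x y := by
  simp [rot_apply]

theorem rot_conj_rot (c : V) {k : ℂ} (hk : ‖k‖ = 1) (p : V) :
    rot B c (conj k) (rot B c k p) = p := by
  have hkk : conj k * k = 1 := by simp [conj_mul', hk]
  by_cases hc : B c c = 0
  -- then the junk value `x / 0 = 0` makes `rot B c k` the scalar `k`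
  · simp [rot_apply, hc, ← mul_smul, mul_comm k, hkk]
  · rw [rot_apply, apply_rot_left, rot_apply, conj_conj]
    match_scalars
    · field_simp
      ring
    · linear_combination hkk

variable {B}

theorem apply_rot_right (hB : ∀ x y, B y x = conj (B x y)) (c : V) (k : ℂ) (x y : V) :
    B x (rot B c k y) = (k - conj k) * (B c y / B c c) * B x c + conj k * B x y := by
  rw [hB, apply_rot_left]
  simp only [map_add, map_mul, map_sub, map_div₀, conj_conj, ← hB]

theorem apply_rot_rot (hB : ∀ x y, B y x = conj (B x y)) (c : V) {k : ℂ} (hk : ‖k‖ = 1)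
    (x y : V) : B (rot B c k x) (rot B c k y) = B x y := by
  have hkk : conj k * k = 1 := by simp [conj_mul', hk]
  rw [apply_rot_left, apply_rot_right hB, apply_rot_right hB]
  by_cases hc : B c c = 0
  · simp [hc]; linear_combination B x y * hkk
  · field_simp
    linear_combination B c c * B x y * hkk

theorem apply_rot_left_self {x : V} (hx : B x x = 1) (c : V) (k : ℂ) :
    B (rot B c k x) x = tance B x c * (conj k - k) + k := by
  rw [apply_rot_left, tance, hx]
  ring

theorem apply_rot_right_self (hB : ∀ x y, B y x = conj (B x y)) {x : V} (hx : B x x = 1)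
    (c : V) (k : ℂ) : B x (rot B c k x) = tance B x c * (k - conj k) + conj k := by
  rw [apply_rot_right hB, tance, hx]
  ring

theorem rot_conj_apply_eq_of_comp_eq_id {c0 c1 c2 c3 : V} {k0 k1 k2 k3 : ℂ}
    (hc0 : B c0 c0 ≠ 0) (hk3 : ‖k3‖ = 1)
    (hrel : rot B c3 k3 ∘ₗ rot B c2 k2 ∘ₗ rot B c1 k1 ∘ₗ rot B c0 k0 = LinearMap.id) :
    rot B c3 (conj k3) c0 = conj k0 • rot B c2 k2 (rot B c1 k1 c0) := by
  have h := LinearMap.congr_fun hrel c0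
  simp only [LinearMap.comp_apply, LinearMap.id_apply, rot_self B hc0, map_smul] at h
  conv_lhs => rw [← h]
  rw [map_smul, rot_conj_rot B c3 hk3]

end

theorem stmt12_general [FiniteDimensional ℂ V] (hdim : Module.finrank ℂ V = 2)
    (B : V →ₗ[ℂ] V →ₗ⋆[ℂ] ℂ) (hherm : ∀ x y, B y x = (starRingEnd ℂ) (B x y))
    (k0 k1 k2 k3 : ℂ)
    (hk1 : ‖k1‖ = 1)
    (hk3 : ‖k3‖ = 1)
    (c0 c1 c2 c3 : V)
    (hc0 : B c0 c0 = 1)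
    (t1 t2 t3 : ℂ)
    (ht1 : t1 = tance B c0 c1) (ht2 : t2 = tance B (rot B c1 k1 c0) c2)
    (ht3 : t3 = tance B c0 c3)
    (hrel : (rot B c3 k3) ∘ₗ (rot B c2 k2) ∘ₗ (rot B c1 k1) ∘ₗ (rot B c0 k0)
              = LinearMap.id) :
    Matrix.det
      !![1, t3 * (k3 - (starRingEnd ℂ) k3) + (starRingEnd ℂ) k3,
           (t2 * ((starRingEnd ℂ) k2 - k2) + k2) * (starRingEnd ℂ) k0;
         t3 * ((starRingEnd ℂ) k3 - k3) + k3, 1,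
           t1 * (k1 - (starRingEnd ℂ) k1) + (starRingEnd ℂ) k1;
         (t2 * (k2 - (starRingEnd ℂ) k2) + (starRingEnd ℂ) k2) * k0,
           t1 * ((starRingEnd ℂ) k1 - k1) + k1, 1] = 0 := by
  set p1 := rot B c3 (conj k3) c0 with hp1
  set p3 := rot B c1 k1 c0 with hp3
  have hk3' : ‖conj k3‖ = 1 := by rwa [RCLike.norm_conj]
  have hp13 : p1 = conj k0 • rot B c2 k2 p3 :=
    rot_conj_apply_eq_of_comp_eq_id (by simp [hc0]) hk3 hrel
  have h11 : B p1 p1 = 1 := by rw [hp1, apply_rot_rot hherm c3 hk3', hc0]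
  have h33 : B p3 p3 = 1 := by rw [hp3, apply_rot_rot hherm c1 hk1, hc0]
  have h10 : B p1 c0 = t3 * (k3 - conj k3) + conj k3 := by
    rw [hp1, apply_rot_left_self hc0, conj_conj, ht3]
  have h01 : B c0 p1 = t3 * (conj k3 - k3) + k3 := by
    rw [hp1, apply_rot_right_self hherm hc0, conj_conj, ht3]
  have h03 : B c0 p3 = t1 * (k1 - conj k1) + conj k1 := by
    rw [hp3, apply_rot_right_self hherm hc0, ht1]
  have h30 : B p3 c0 = t1 * (conj k1 - k1) + k1 := by
    rw [hp3, apply_rot_left_self hc0, ht1]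
  have h13 : B p1 p3 = (t2 * (conj k2 - k2) + k2) * conj k0 := by
    rw [hp13, map_smul, LinearMap.smul_apply, apply_rot_left_self h33, ht2, smul_eq_mul, mul_comm]
  have h31 : B p3 p1 = (t2 * (k2 - conj k2) + conj k2) * k0 := by
    rw [hp13, map_smulₛₗ, apply_rot_right_self hherm h33, ht2, smul_eq_mul, conj_conj, mul_comm]
  refine (congrArg det ?_).trans
    (det_of_sesq_eq_zero_of_finrank_lt B ![p1, c0, p3] ![p1, c0, p3] (by simp [hdim]))
  ext i j
  fin_cases i <;> fin_cases j <;> simp [h11, h10, h13, h01, hc0, h03, h31, h30, h33]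

theorem stmt12 [FiniteDimensional ℂ V] (hdim : Module.finrank ℂ V = 2)
    (B : V →ₗ[ℂ] V →ₗ⋆[ℂ] ℂ) (hherm : ∀ x y, B y x = (starRingEnd ℂ) (B x y))
    (k0 k1 k2 k3 : ℂ)
    (hk0 : ‖k0‖ = 1) (hk1 : ‖k1‖ = 1)
    (hk2 : ‖k2‖ = 1) (hk3 : ‖k3‖ = 1)
    (c0 c1 c2 c3 : V)
    (hc0 : B c0 c0 = 1) (hc1 : B c1 c1 = 1) (hc2 : B c2 c2 = 1) (hc3 : B c3 c3 = 1)
    (t1 t2 t3 : ℂ)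
    (ht1 : t1 = tance B c0 c1) (ht2 : t2 = tance B (rot B c1 k1 c0) c2)
    (ht3 : t3 = tance B c0 c3)
    (hrel : (rot B c3 k3) ∘ₗ (rot B c2 k2) ∘ₗ (rot B c1 k1) ∘ₗ (rot B c0 k0)
              = LinearMap.id) :
    Matrix.det
      !![1, t3 * (k3 - (starRingEnd ℂ) k3) + (starRingEnd ℂ) k3,
           (t2 * ((starRingEnd ℂ) k2 - k2) + k2) * (starRingEnd ℂ) k0;
         t3 * ((starRingEnd ℂ) k3 - k3) + k3, 1,
           t1 * (k1 - (starRingEnd ℂ) k1) + (starRingEnd ℂ) k1;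
         (t2 * (k2 - (starRingEnd ℂ) k2) + (starRingEnd ℂ) k2) * k0,
           t1 * ((starRingEnd ℂ) k1 - k1) + k1, 1] = 0 :=
  stmt12_general hdim B hherm k0 k1 k2 k3 hk1 hk3 c0 c1 c2 c3 hc0 t1 t2 t3 ht1 ht2 ht3 hrel
end

section
/- Let p₁, p₂, p₃ be three points of the hyperbolic plane (or of any metric space in which any point equidistant from three pairwise distinct points is unique, e.g. the hyperbolic plane B(V)) that are pairwise distinct. Then there exists at most one point c with dist(c, p₁) = dist(c, p₂) = dist(c, p₃). -/
/-!
A hyperbolic circle in the upper half-plane is a Euclidean circle in `ℂ`: the one about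
`c.center r` of radius `c.im * sinh r`. Two distinct Euclidean circles meet in at most two
points, so three distinct points lie on at most one of them, and the Euclidean circle
determines its hyperbolic centre because `(c.im * cosh r) ^ 2 - (c.im * sinh r) ^ 2 = c.im ^ 2`.
-/

open EuclideanGeometry UpperHalfPlane

namespace UpperHalfPlane

noncomputable def euclideanSphere (c : ℍ) (r : ℝ) : Sphere ℂ :=
  ⟨c.center r, c.im * Real.sinh r⟩

theorem coe_mem_euclideanSphere_iff {c z : ℍ} {r : ℝ} :
    (z : ℂ) ∈ c.euclideanSphere r ↔ dist c z = r := by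
  rw [EuclideanGeometry.mem_sphere, dist_comm c, dist_eq_iff_dist_coe_center_eq]
  rfl

theorem eq_of_euclideanSphere_eq {c c' : ℍ} {r r' : ℝ}
    (h : c.euclideanSphere r = c'.euclideanSphere r') : c = c' := by
  have hcenter : c.center r = c'.center r' :=
    UpperHalfPlane.ext (congrArg Sphere.center h)
  have hradius : c.im * Real.sinh r = c'.im * Real.sinh r' := congrArg Sphere.radius h
  have hre : c.re = c'.re := by simpa using congrArg re hcenter
  have hcosh : c.im * Real.cosh r = c'.im * Real.cosh r' := by simpa using congrArg im hcenter
  have hsq : c.im ^ 2 = c'.im ^ 2 := by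
    linear_combination (c.im * Real.cosh r + c'.im * Real.cosh r') * hcosh
      - (c.im * Real.sinh r + c'.im * Real.sinh r') * hradius
      - c.im ^ 2 * Real.cosh_sq_sub_sinh_sq r + c'.im ^ 2 * Real.cosh_sq_sub_sinh_sq r'
  exact ext_re_im hre ((sq_eq_sq₀ c.im_pos.le c'.im_pos.le).1 hsq)

end UpperHalfPlane

theorem stmt19 (p1 p2 p3 : UpperHalfPlane)
    (h12 : p1 ≠ p2) (h23 : p2 ≠ p3) (h13 : p1 ≠ p3) :
    ∀ c c' : UpperHalfPlane,
      dist c p1 = dist c p2 → dist c p2 = dist c p3 →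
      dist c' p1 = dist c' p2 → dist c' p2 = dist c' p3 →
      c = c' := by
  intro c c' hc12 hc23 hc12' hc23'
  set S := c.euclideanSphere (dist c p1)
  set S' := c'.euclideanSphere (dist c' p1)
  have hS : S = S' := by
    by_contra hne
    have hp3 := eq_of_mem_sphere_of_mem_sphere_of_finrank_eq_two Complex.finrank_real_complex hne
      (coe_injective.ne h12)
      (coe_mem_euclideanSphere_iff.2 rfl) (coe_mem_euclideanSphere_iff.2 hc12.symm)
      (coe_mem_euclideanSphere_iff.2 (hc12.trans hc23).symm)
      (coe_mem_euclideanSphere_iff.2 rfl) (coe_mem_euclideanSphere_iff.2 hc12'.symm)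
      (coe_mem_euclideanSphere_iff.2 (hc12'.trans hc23').symm)
    rcases hp3 with h | h
    · exact h13 (coe_injective h).symm
    · exact h23 (coe_injective h).symm
  exact eq_of_euclideanSphere_eq hS
end
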